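/- Given any Σ^0_2 set U of finite binary strings, there exists a monotone machine N such that for every X ∈ 2^ω, the output N(X) is infinite if and only if X has no prefix in U. -/

import Mathlib

open scoped Classical
open MeasureTheory

namespace RandProb

/-- Cantor space: the space of infinite binary sequences. -/
abbrev Cantor := ℕ → Bool

/-! ### Oracle partial recursive functions, via codes -/

/-- Codes for partial recursive functions with access to an oracle `O : ℕ → ℕ`.
These codes play the role of (oracle) Turing machines. -/
inductive CodeO : Type
  | zero : CodeO
  | succ : CodeO
  | left : CodeO
  | right : CodeO
  | oracle : CodeO
  | pair : CodeO → CodeO → CodeO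
  | comp : CodeO → CodeO → CodeO
  | prec : CodeO → CodeO → CodeO
  | rfind' : CodeO → CodeO

/-- Evaluation of an oracle code with (total) oracle `O`. -/
def CodeO.eval (O : ℕ → ℕ) : CodeO → ℕ →. ℕ
  | .zero => pure 0
  | .succ => Nat.succ
  | .left => ↑fun n : ℕ => n.unpair.1
  | .right => ↑fun n : ℕ => n.unpair.2
  | .oracle => ↑fun n : ℕ => O n
  | .pair cf cg => fun n => Nat.pair <$> cf.eval O n <*> cg.eval O n
  | .comp cf cg => fun n => cg.eval O n >>= cf.eval O
  | .prec cf cg =>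
    Nat.unpaired fun a n =>
      n.rec (cf.eval O a) fun y IH => do
        let i ← IH
        cg.eval O (Nat.pair a (Nat.pair y i))
  | .rfind' cf =>
    Nat.unpaired fun a m =>
      (Nat.rfind fun n => (fun m => m = 0) <$> cf.eval O (Nat.pair a (n + m))).map (· + m)

/-- A canonical injective numbering of oracle codes. -/
def CodeO.encode : CodeO → ℕ
  | .zero => 0
  | .succ => 1
  | .left => 2
  | .right => 3
  | .oracle => 4
  | .pair cf cg => 2 * (2 * Nat.pair cf.encode cg.encode) + 5
  | .comp cf cg => 2 * (2 * Nat.pair cf.encode cg.encode + 1) + 5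
  | .prec cf cg => 2 * (2 * Nat.pair cf.encode cg.encode) + 6
  | .rfind' cf => 2 * (2 * cf.encode + 1) + 6

/-- The Turing jump of an oracle: the halting problem relative to `O`,
as a `{0,1}`-valued function. -/
noncomputable def jump (O : ℕ → ℕ) : ℕ → ℕ := fun e =>
  if ∃ c : CodeO, c.encode = e ∧ (c.eval O e).Dom then 1 else 0

/-- `iterJump n` is `∅^(n)`, the `n`-th iterate of the halting problem (as an oracle). -/
noncomputable def iterJump : ℕ → ℕ → ℕ
  | 0 => fun _ => 0
  | n + 1 => jump (iterJump n)

/-- `S ⊆ ℕ` is computably enumerable relative to the oracle `O`. -/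
def CeIn (O : ℕ → ℕ) (S : Set ℕ) : Prop := ∃ c : CodeO, S = {m | (c.eval O m).Dom}

/-- The left Dedekind cut of `α` (as a set of codes of rationals) is c.e. in `O`. -/
def LeftCeIn (O : ℕ → ℕ) (α : ℝ) : Prop :=
  CeIn O {m | ∃ q : ℚ, Encodable.encode q = m ∧ (q : ℝ) < α}

/-- The right Dedekind cut of `α` (as a set of codes of rationals) is c.e. in `O`. -/
def RightCeIn (O : ℕ → ℕ) (α : ℝ) : Prop :=
  CeIn O {m | ∃ q : ℚ, Encodable.encode q = m ∧ α < (q : ℝ)}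

/-! ### Martin-Löf randomness for real numbers -/

/-- The `i`-th component of a Martin-Löf test coded by the set `W ⊆ ℕ`:
the union of all open rational intervals whose codes are enumerated into the
`i`-th section of `W`. -/
def testSet (W : Set ℕ) (i : ℕ) : Set ℝ :=
  {x | ∃ p q : ℚ, Nat.pair i (Encodable.encode (p, q)) ∈ W ∧ (p : ℝ) < x ∧ x < (q : ℝ)}

/-- `α` is Martin-Löf random relative to the oracle `O`. -/
def MLRandomIn (O : ℕ → ℕ) (α : ℝ) : Prop :=
  ∀ W : Set ℕ, CeIn O W →
    (∀ i, volume (testSet W i) ≤ ENNReal.ofReal ((2 : ℝ)⁻¹ ^ i)) →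
    ∃ i, α ∉ testSet W i

/-- `α` is `n`-random: Martin-Löf random relative to `∅^(n-1)`. -/
def NRandom (n : ℕ) (α : ℝ) : Prop := MLRandomIn (iterJump (n - 1)) α

/-! ### The uniform measure on Cantor space -/

/-- The binary digits of a real number (meaningful on `[0,1)`). -/
noncomputable def digits (x : ℝ) : Cantor := fun n => decide (⌊x * 2 ^ (n + 1)⌋ % 2 = 1)

/-- The uniform (Lebesgue) product measure on Cantor space, obtained as the
pushforward of Lebesgue measure on `[0,1)` under the binary-digit map. -/
noncomputable def mu : Measure Cantor :=
  Measure.map digits (volume.restrict (Set.Ico (0 : ℝ) 1))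

/-- The uniform measure of a set of elements of Cantor space, as a real number. -/
noncomputable def muR (S : Set Cantor) : ℝ := (mu S).toReal

/-! ### Strings, prefixes and cylinders -/

/-- The length-`n` initial segment of `X ∈ 2^ω`, as a finite binary string. -/
def initSeg (X : Cantor) (n : ℕ) : List Bool := (List.range n).map X

/-- `⟦S⟧`: the elements of Cantor space having a prefix in the set of strings `S`. -/
def cyl (S : Set (List Bool)) : Set Cantor := {X | ∃ n, initSeg X n ∈ S}

/-- A set of strings is prefix-free if none of its elements properly extends another. -/
def IsPrefixFree (S : Set (List Bool)) : Prop := ∀ σ ∈ S, ∀ τ ∈ S, σ <+: τ → σ = τ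

/-- A set of strings is upward closed if it is closed under taking extensions. -/
def UpClosed (S : Set (List Bool)) : Prop := ∀ σ ∈ S, ∀ τ, σ <+: τ → τ ∈ S

/-- Two strings are compatible if one is a prefix of the other. -/
def Compatible (σ τ : List Bool) : Prop := σ <+: τ ∨ τ <+: σ

/-! ### Oracle machines -/

/-- An element of Cantor space viewed as a `{0,1}`-valued oracle. -/
def oX (X : Cantor) : ℕ → ℕ := fun n => cond (X n) 1 0

/-- `evalO X c n`: the (possibly divergent) output of the oracle machine `c`
on input `n` with oracle `X`. -/
def evalO (X : Cantor) (c : CodeO) (n : ℕ) : Part ℕ := c.eval (oX X) n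

/-- The oracle obtained by writing the string `ρ` before the bits of `X`. -/
def prepend (ρ : List Bool) (X : Cantor) : Cantor := fun n =>
  if n < ρ.length then ρ.getD n false else X (n - ρ.length)

/-- `X ∈ 2^ω` extends the finite string `ρ`. -/
def Extends (X : Cantor) (ρ : List Bool) : Prop := initSeg X ρ.length = ρ

/-- `u` is a universal oracle machine: some effective, prefix-free translation
`c ↦ σ_c` satisfies `u(σ_c * X, n) ≃ c(X, n)` for all machines `c`. -/
def UniversalOM (u : CodeO) : Prop :=
  ∃ σ : CodeO → List Bool,
    (∃ f : ℕ → ℕ, Computable f ∧ ∀ c : CodeO, f c.encode = Encodable.encode (σ c)) ∧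
    IsPrefixFree (Set.range σ) ∧
    ∀ (c : CodeO) (X : Cantor) (n : ℕ), evalO (prepend (σ c) X) u n = evalO X c n

/-- `TOT(c)`: the oracles `X` such that the function `c(X)` is total. -/
def TOT (c : CodeO) : Set Cantor := {X | ∀ n, (evalO X c n).Dom}

/-- The domain of the partial function `c(X)`. -/
def domSet (c : CodeO) (X : Cantor) : Set ℕ := {n | (evalO X c n).Dom}

/-- The range of the partial function `c(X)`. -/
def ranSet (c : CodeO) (X : Cantor) : Set ℕ := {v | ∃ n, v ∈ evalO X c n}

/-- `INF(c)`: the oracles `X` such that `c(X)` has infinite domain. -/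
def INF (c : CodeO) : Set Cantor := {X | (domSet c X).Infinite}

/-- `COF(c)`: the oracles `X` such that `c(X)` has cofinite domain. -/
def COF (c : CodeO) : Set Cantor := {X | (domSet c X)ᶜ.Finite}

/-- `COM(c)`: the oracles `X` such that `c(X)` has computable domain. -/
def COM (c : CodeO) : Set Cantor := {X | ComputablePred fun n => n ∈ domSet c X}

/-- The characteristic function of a set of naturals. -/
noncomputable def chi (A : Set ℕ) : ℕ → ℕ := fun n => if n ∈ A then 1 else 0

/-- Turing reducibility between sets of naturals. -/
def TuringLEs (B A : Set ℕ) : Prop := ∃ c : CodeO, ∀ n, c.eval (chi A) n = Part.some (chi B n)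

/-- The halting problem `∅'` as a set of naturals. -/
noncomputable def HaltingSet : Set ℕ := {e | iterJump 1 e = 1}

/-- `COMPL(c)`: the oracles `X` such that the domain of `c(X)` computes the halting problem. -/
noncomputable def COMPL (c : CodeO) : Set Cantor := {X | TuringLEs HaltingSet (domSet c X)}

/-- Turing reducibility between total functions on ℕ. -/
def TuringLEf (f g : ℕ → ℕ) : Prop := ∃ c : CodeO, ∀ n, c.eval g n = Part.some (f n)

/-- A real number viewed as an oracle, via its binary expansion. -/
noncomputable def realOracle (α : ℝ) : ℕ → ℕ := oX (digits α)

/-- Two reals have Turing-incomparable degrees. -/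
noncomputable def TIncompReal (α β : ℝ) : Prop :=
  ¬ TuringLEf (realOracle α) (realOracle β) ∧ ¬ TuringLEf (realOracle β) (realOracle α)

/-! ### Arithmetical hierarchy -/

/-- Evaluation with the trivial (empty) oracle: ordinary partial recursion. -/
def eval0 (c : CodeO) : ℕ →. ℕ := c.eval fun _ => 0

/-- `SigmaNumIdx n c` is the `Σ^0_{n+1}` subset of `ℕ` with index `c`. -/
def SigmaNumIdx : ℕ → CodeO → Set ℕ
  | 0, c => {m | (eval0 c m).Dom}
  | n + 1, c => {m | ∃ k, Nat.pair m k ∉ SigmaNumIdx n c}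

/-- `S ⊆ ℕ` is `Σ^0_n` (intended for `n ≥ 1`). -/
def SigmaN (n : ℕ) (S : Set ℕ) : Prop := ∃ c : CodeO, S = SigmaNumIdx (n - 1) c

/-- The set of codes of the elements of a set of binary strings. -/
def strCodes (S : Set (List Bool)) : Set ℕ := {m | ∃ σ ∈ S, Encodable.encode σ = m}

/-- A set of binary strings is `Σ^0_n`. -/
def SigmaStr (n : ℕ) (S : Set (List Bool)) : Prop := SigmaN n (strCodes S)

/-- A set of binary strings is `Π^0_n`: its complement is `Σ^0_n`. -/
def PiStr (n : ℕ) (S : Set (List Bool)) : Prop := SigmaStr n Sᶜ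

/-- A set of binary strings is c.e. relative to the oracle `O`. -/
def CeStrIn (O : ℕ → ℕ) (S : Set (List Bool)) : Prop := CeIn O (strCodes S)

/-- `SigmaClassIdx n c m` is the `Σ^0_{n+1}` class of elements of Cantor space
with index `c` and parameter `m`. -/
def SigmaClassIdx : ℕ → CodeO → ℕ → Set Cantor
  | 0, c, m => {X | (evalO X c m).Dom}
  | n + 1, c, m => {X | ∃ k, X ∉ SigmaClassIdx n c (Nat.pair m k)}

/-! ### Monotone machines -/

/-- A monotone machine: a partial computable, monotone map on finite binary strings. -/
structure MonoMachine where
  f : List Bool →. List Bool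
  partrec : Partrec f
  mono : ∀ ⦃σ τ a b : List Bool⦄, σ <+: τ → a ∈ f σ → b ∈ f τ → a <+: b

/-- The oracles `X` such that the output of the monotone machine on `X` is infinite. -/
def MonoINF (M : MonoMachine) : Set Cantor :=
  {X | ∀ k, ∃ n a, a ∈ M.f (initSeg X n) ∧ k ≤ a.length}

/-- The `k`-th bit of the output `M(X)` of a monotone machine is `b`. -/
def MonoMachine.hasBit (M : MonoMachine) (X : Cantor) (k : ℕ) (b : Bool) : Prop :=
  ∃ n a, a ∈ M.f (initSeg X n) ∧ a[k]? = some b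

/-- `U` is a universal monotone machine. -/
def UniversalMono (U : MonoMachine) : Prop :=
  ∃ (M : ℕ → MonoMachine) (σ : ℕ → List Bool),
    Partrec₂ (fun (e : ℕ) (τ : List Bool) => (M e).f τ) ∧
    (∀ V : MonoMachine, ∃ e, (M e).f = V.f) ∧
    Computable σ ∧ IsPrefixFree (Set.range σ) ∧
    ∀ e τ, U.f (σ e ++ τ) = (M e).f τ

/-! ### Infinitary self-delimiting machines -/

/-- Chaitin's infinitary self-delimiting machines: `f σ n` is the `n`-th approximation
of the output on program `σ` (`none` meaning divergence); the convergence relation is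
decidable, approximations are monotone, and machines are self-delimiting. -/
structure InfMachine where
  f : List Bool → ℕ → Option (List Bool)
  computable : Computable₂ f
  mono : ∀ σ m n a, n < m → f σ m = some a → ∃ b, f σ n = some b ∧ b <+: a
  sd : ∀ σ τ n a, f σ n = some a → f (σ ++ τ) n = some a

/-- `M^∞(σ)↓`: all approximations converge. -/
def InfMachine.domInf (M : InfMachine) (σ : List Bool) : Prop := ∀ n, M.f σ n ≠ none

/-- The domain of `M^∞`. -/
def InfMachine.DOM (M : InfMachine) : Set (List Bool) := {σ | M.domInf σ}

/-- The output `M^∞(σ)` is infinite (a stream). -/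
def InfMachine.outInf (M : InfMachine) (σ : List Bool) : Prop :=
  ∀ k, ∃ n a, M.f σ n = some a ∧ k ≤ a.length

/-- `FIN(M^∞)`: programs in the domain with finite output. -/
def InfMachine.FIN (M : InfMachine) : Set (List Bool) := {σ | M.domInf σ ∧ ¬ M.outInf σ}

/-- `INF(M^∞)`: programs in the domain with infinite output. -/
def InfMachine.INF (M : InfMachine) : Set (List Bool) := {σ | M.domInf σ ∧ M.outInf σ}

/-- The `k`-th bit of the output `M^∞(σ)` is `b`. -/
def InfMachine.hasBit (M : InfMachine) (σ : List Bool) (k : ℕ) (b : Bool) : Prop :=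
  ∃ n a, M.f σ n = some a ∧ a[k]? = some b

/-- The domain of the prefix-free machine `M^*`: minimal strings in the domain of `M^∞`. -/
def InfMachine.DOMstar (M : InfMachine) : Set (List Bool) :=
  {σ | M.domInf σ ∧ ∀ τ, τ <+: σ → τ ≠ σ → ¬ M.domInf τ}

/-- Programs whose output is a stream with a tail of 1s. -/
def InfMachine.COFout (M : InfMachine) : Set (List Bool) :=
  {σ | M.domInf σ ∧ M.outInf σ ∧ ∃ t, ∀ k, t ≤ k → M.hasBit σ k true}

/-- `A^∞(σ) ≃ B^∞(τ)`: both converge or both diverge, with equal outputs. -/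
def InfAgree (A : InfMachine) (σ : List Bool) (B : InfMachine) (τ : List Bool) : Prop :=
  (A.domInf σ ↔ B.domInf τ) ∧ (A.domInf σ → ∀ k b, (A.hasBit σ k b ↔ B.hasBit τ k b))

/-- `U` is a universal infinitary self-delimiting machine. -/
def UniversalInf (U : InfMachine) : Prop :=
  ∃ (M : ℕ → InfMachine) (σ : ℕ → List Bool),
    Computable (fun p : ℕ × List Bool × ℕ => (M p.1).f p.2.1 p.2.2) ∧
    (∀ V : InfMachine, ∃ e, ∀ τ, InfAgree (M e) τ V τ) ∧
    Computable σ ∧ IsPrefixFree (Set.range σ) ∧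
    ∀ e τ, InfAgree U (σ e ++ τ) (M e) τ

end RandProb

/-!
Write `U = {σ | ∃ k, φ⟨σ, k⟩↑}` for a partial computable `φ`. Then `X` has no prefix in `U`
iff `φ⟨X↾n, k⟩↓` for every pair `i = ⟨n, k⟩`. On input `τ` the machine prints `1^g(τ)`, where
`g(τ)` is the length of the initial run of pairs `i < |τ|` whose computation is seen to halt
within `|τ|` steps, reading `X↾n` off `τ`. Along `X` these confirmations only accumulate, so the
output is monotone, and it is unbounded exactly when every pair is eventually confirmed.
-/

namespace RandProb

open Nat.Partrec (Code)

theorem partrec_eval0 (c : CodeO) : Nat.Partrec (eval0 c) := by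
  induction c with
  | zero => exact .zero
  | succ => exact .succ
  | left => exact .left
  | right => exact .right
  | oracle => exact .of_primrec .zero
  | pair _ _ hf hg => exact hf.pair hg
  | comp _ _ hf hg => exact hf.comp hg
  | prec _ _ hf hg => exact hf.prec hg
  | rfind' _ hf => exact hf.rfind'

theorem exists_code_of_sigmaStr_two {U : Set (List Bool)} (hU : SigmaStr 2 U) :
    ∃ cc : Code, ∀ σ, σ ∉ U ↔ ∀ k, (cc.eval (Nat.pair (Encodable.encode σ) k)).Dom := by
  obtain ⟨c, hc⟩ := hU
  obtain ⟨cc, hcc⟩ := Code.exists_code.1 (partrec_eval0 c)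
  refine ⟨cc, fun σ => ?_⟩
  have hmem : σ ∈ U ↔ Encodable.encode σ ∈ strCodes U :=
    ⟨fun h => ⟨σ, h, rfl⟩, fun ⟨τ, hτ, he⟩ => Encodable.encode_injective he ▸ hτ⟩
  simp [hmem, hc, hcc, SigmaNumIdx]

theorem dom_eval_iff_exists_evaln_isSome {cc : Code} {n : ℕ} :
    (cc.eval n).Dom ↔ ∃ s, (cc.evaln s n).isSome := by
  simp only [Part.dom_iff_mem, Option.isSome_iff_exists, Code.evaln_complete, Option.mem_def]
  exact exists_comm

theorem _root_.List.IsPrefix.take_eq_take {α : Type*} {σ τ : List α} (h : σ <+: τ) {n : ℕ}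
    (hn : n ≤ σ.length) :
    σ.take n = τ.take n := by
  rw [List.prefix_iff_eq_take.1 h, List.take_take, min_eq_left hn]

@[simp]
theorem length_initSeg (X : Cantor) (n : ℕ) : (initSeg X n).length = n := by
  simp [initSeg]

theorem take_initSeg (X : Cantor) {m n : ℕ} (h : m ≤ n) : (initSeg X n).take m = initSeg X m := by
  simp [initSeg, ← List.map_take, List.take_range, min_eq_left h]

theorem initSeg_prefix_initSeg (X : Cantor) {m n : ℕ} (h : m ≤ n) : initSeg X m <+: initSeg X n :=
  take_initSeg X h ▸ List.take_prefix _ _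

def unaryMachine (g : List Bool → ℕ) (hg : Computable g)
    (hmono : ∀ ⦃σ τ⦄, σ <+: τ → g σ ≤ g τ) : MonoMachine where
  f τ := Part.some (List.replicate (g τ) true)
  partrec := by
    have hrep : Primrec fun n => List.replicate n true :=
      (Primrec.list_map Primrec.list_range (Primrec.const true).to₂).of_eq fun n => by simp
    exact (hrep.to_comp.comp hg).partrec
  mono σ τ a b h ha hb := by
    rw [Part.mem_some_iff.1 ha, Part.mem_some_iff.1 hb]
    exact List.prefix_replicate_iff.2 ⟨by simpa using hmono h, by simp⟩

theorem mem_monoINF_unaryMachine {g : List Bool → ℕ} {hg : Computable g}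
    {hmono : ∀ ⦃σ τ⦄, σ <+: τ → g σ ≤ g τ} {X : Cantor} :
    X ∈ MonoINF (unaryMachine g hg hmono) ↔ ∀ k, ∃ n, k ≤ g (initSeg X n) := by
  simp [MonoINF, unaryMachine]

section RunLength

variable {p : List Bool → ℕ → Bool}

def runLength (p : List Bool → ℕ → Bool) (τ : List Bool) : ℕ :=
  Nat.findGreatest (fun k => ∀ j < k, p τ j) τ.length

theorem le_runLength_iff {τ : List Bool} {k : ℕ} :
    k ≤ runLength p τ ↔ k ≤ τ.length ∧ ∀ j < k, p τ j := by
  refine ⟨fun h => ⟨h.trans (Nat.findGreatest_le _), fun j hj => ?_⟩,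
    fun h => Nat.le_findGreatest h.1 h.2⟩
  exact Nat.findGreatest_spec (P := fun k => ∀ j < k, p τ j) (m := 0) (Nat.zero_le _) (by simp) j
    (hj.trans_le h)

theorem runLength_mono (hp : ∀ ⦃σ τ⦄ i, σ <+: τ → p σ i → p τ i) ⦃σ τ : List Bool⦄
    (h : σ <+: τ) : runLength p σ ≤ runLength p τ :=
  Nat.findGreatest_mono (fun _ hk j hj => hp j h (hk j hj)) h.length_le

theorem primrec_runLength (hp : Primrec₂ p) : Primrec (runLength p) := by
  have hrel : PrimrecRel fun (τ : List Bool) (k : ℕ) => ∀ j < k, p τ j :=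
    ((PrimrecRel.forall_mem_list (Primrec.eq.comp₂ (hp.comp₂ .right .left) (.const true))).comp
      (Primrec.list_range.comp .snd) .fst).of_eq (by simp)
  exact Primrec.nat_findGreatest Primrec.list_length hrel

theorem exists_initSeg_forall_lt (hp : ∀ ⦃σ τ⦄ i, σ <+: τ → p σ i → p τ i) {X : Cantor}
    (hX : ∀ i, ∃ n, p (initSeg X n) i) (k : ℕ) :
    ∃ n, k ≤ n ∧ ∀ j < k, p (initSeg X n) j := by
  induction k with
  | zero => exact ⟨0, le_rfl, by simp⟩
  | succ k ih =>
    obtain ⟨n, hkn, hn⟩ := ih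
    obtain ⟨m, hm⟩ := hX k
    refine ⟨max n m + 1, by omega, fun j hj => ?_⟩
    rcases Nat.lt_succ_iff_lt_or_eq.1 hj with hj | rfl
    · exact hp j (initSeg_prefix_initSeg X (by omega)) (hn j hj)
    · exact hp j (initSeg_prefix_initSeg X (by omega)) hm

theorem exists_monoMachine_monoINF_iff (hp : Primrec₂ p)
    (hmono : ∀ ⦃σ τ⦄ i, σ <+: τ → p σ i → p τ i) :
    ∃ N : MonoMachine, ∀ X, X ∈ MonoINF N ↔ ∀ i, ∃ n, p (initSeg X n) i := by
  refine ⟨unaryMachine (runLength p) (primrec_runLength hp).to_comp (runLength_mono hmono),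
    fun X => mem_monoINF_unaryMachine.trans ⟨fun h i => ?_, fun h k => ?_⟩⟩
  · obtain ⟨n, hn⟩ := h (i + 1)
    exact ⟨n, (le_runLength_iff.1 hn).2 i i.lt_succ_self⟩
  · obtain ⟨n, hkn, hn⟩ := exists_initSeg_forall_lt hmono h k
    exact ⟨n, le_runLength_iff.2 ⟨by simpa using hkn, hn⟩⟩

end RunLength

section StageHalts

variable (cc : Code)

def stageHalts (τ : List Bool) (i : ℕ) : Bool :=
  decide (i.unpair.1 ≤ τ.length) &&
    (cc.evaln τ.length (Nat.pair (Encodable.encode (τ.take i.unpair.1)) i.unpair.2)).isSome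

theorem primrec₂_stageHalts : Primrec₂ (stageHalts cc) := by
  have hn : Primrec₂ fun (_ : List Bool) (i : ℕ) => i.unpair.1 :=
    Primrec.fst.comp (Primrec.unpair.comp .snd)
  have hk : Primrec₂ fun (_ : List Bool) (i : ℕ) => i.unpair.2 :=
    Primrec.snd.comp (Primrec.unpair.comp .snd)
  have harg : Primrec₂ fun (τ : List Bool) (i : ℕ) =>
      Nat.pair (Encodable.encode (τ.take i.unpair.1)) i.unpair.2 :=
    Primrec₂.natPair.comp₂ (Primrec.encode.comp₂ (Primrec.list_take.comp₂ hn .left)) hk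
  exact Primrec.and.comp₂ (Primrec.nat_le.comp₂ hn (Primrec.list_length.comp₂ .left)).decide
    (Primrec.option_isSome.comp
      (Code.primrec_evaln.comp (((Primrec.list_length.comp .fst).pair (.const cc)).pair harg)))

theorem stageHalts_mono ⦃σ τ : List Bool⦄ (i : ℕ) (h : σ <+: τ) (hσ : stageHalts cc σ i) :
    stageHalts cc τ i := by
  simp only [stageHalts, Bool.and_eq_true, decide_eq_true_eq, Option.isSome_iff_exists] at hσ ⊢
  obtain ⟨hle, x, hx⟩ := hσ
  exact ⟨hle.trans h.length_le, x, h.take_eq_take hle ▸ Code.evaln_mono h.length_le hx⟩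

theorem forall_exists_stageHalts_iff (X : Cantor) :
    (∀ i, ∃ n, stageHalts cc (initSeg X n) i) ↔
      ∀ n k, (cc.eval (Nat.pair (Encodable.encode (initSeg X n)) k)).Dom := by
  simp only [dom_eval_iff_exists_evaln_isSome]
  constructor
  · intro h n k
    obtain ⟨m, hm⟩ := h (Nat.pair n k)
    simp only [stageHalts, Nat.unpair_pair, length_initSeg, Bool.and_eq_true,
      decide_eq_true_eq] at hm
    exact ⟨m, take_initSeg X hm.1 ▸ hm.2⟩
  · intro h i
    obtain ⟨s, hs⟩ := h i.unpair.1 i.unpair.2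
    refine ⟨max i.unpair.1 s, ?_⟩
    simp only [stageHalts, length_initSeg, take_initSeg X (le_max_left _ _), Bool.and_eq_true,
      decide_eq_true_eq, Option.isSome_iff_exists] at hs ⊢
    obtain ⟨x, hx⟩ := hs
    exact ⟨le_max_left _ _, x, Code.evaln_mono (le_max_right _ _) hx⟩

end StageHalts

/-- **From a `Σ^0_2` set of strings to a monotone machine.**
Given a `Σ^0_2` set `U` of strings there is a monotone machine `N` such that for every
`X ∈ 2^ω` the output `N(X)` is infinite iff `X` has no prefix in `U`. -/
theorem sigma2_to_monotone_machine (U : Set (List Bool)) (hU : SigmaStr 2 U) :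
    ∃ N : MonoMachine, ∀ X : Cantor, X ∈ MonoINF N ↔ X ∉ cyl U := by
  obtain ⟨cc, hcc⟩ := exists_code_of_sigmaStr_two hU
  obtain ⟨N, hN⟩ := exists_monoMachine_monoINF_iff (primrec₂_stageHalts cc) (stageHalts_mono cc)
  refine ⟨N, fun X => ?_⟩
  rw [hN, forall_exists_stageHalts_iff]
  simp only [cyl, Set.mem_ofPred_eq, not_exists, hcc]

end RandProb
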